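/- arXiv:2410.08077 — 3 statements merged into one kernel-verified Lean document; each statement's English description precedes it below -/
import Mathlib

section
/- Let r be a nonnegative integer, let G be a (P5 + rK1)-free graph, and let C be a finite set of connected induced subgraphs of G. Then the blob graph H(G, C) is also (P5 + rK1)-free. -/
open SimpleGraph

/-- `G` contains no induced subgraph isomorphic to `H`. -/
def SimpleGraph.InducedFree {α β : Type*} (G : SimpleGraph α) (H : SimpleGraph β) : Prop :=
  IsEmpty (H ↪g G)

/-- The graph obtained from `G` by contracting the edge `uv`: delete `u` and `v` and
add a new vertex (`none`) adjacent to `(N(u) ∪ N(v)) \ {u, v}`. -/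
def SimpleGraph.contract {α : Type*} (G : SimpleGraph α) (u v : α) :
    SimpleGraph (Option {x : α // x ≠ u ∧ x ≠ v}) where
  Adj a b :=
    match a, b with
    | none, none => False
    | none, some x => G.Adj u x.1 ∨ G.Adj v x.1
    | some x, none => G.Adj u x.1 ∨ G.Adj v x.1
    | some x, some y => G.Adj x.1 y.1
  symm := by
    constructor
    rintro (_ | x) (_ | y) h
    · exact h
    · exact h
    · exact h
    · exact h.symm
  loopless := by
    constructor
    rintro (_ | x) h
    · exact h
    · exact G.loopless.irrefl _ h

/-- The disjoint union of a path on 5 vertices and `r` isolated vertices. -/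
def P5rK1 (r : ℕ) : SimpleGraph (Fin 5 ⊕ Fin r) :=
  pathGraph 5 ⊕g (⊥ : SimpleGraph (Fin r))

/-- `u` and `v` are true twins: adjacent with the same neighbours outside the pair. -/
def SimpleGraph.TrueTwins {α : Type*} (G : SimpleGraph α) (u v : α) : Prop :=
  G.Adj u v ∧ ∀ w, w ≠ u → w ≠ v → (G.Adj u w ↔ G.Adj v w)

/-- The external neighbourhood of a set `S`. -/
def SimpleGraph.extN {α : Type*} (G : SimpleGraph α) (S : Set α) : Set α :=
  {v | v ∉ S ∧ ∃ u ∈ S, G.Adj u v}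

/-- `s` is an independent set of `G`. -/
def SimpleGraph.IsIndep {α : Type*} (G : SimpleGraph α) (s : Set α) : Prop :=
  ∀ ⦃x⦄, x ∈ s → ∀ ⦃y⦄, y ∈ s → ¬ G.Adj x y

/-- `X` and `Y` are anticomplete: disjoint and with no edges between them. -/
def SimpleGraph.Anticomplete {α : Type*} (G : SimpleGraph α) (X Y : Set α) : Prop :=
  Disjoint X Y ∧ ∀ x ∈ X, ∀ y ∈ Y, ¬ G.Adj x y

/-- The blob graph of a family `𝒞` of (vertex sets of) subgraphs of `G`. -/
def blob {α : Type*} (G : SimpleGraph α) (𝒞 : Set (Set α)) : SimpleGraph 𝒞 where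
  Adj C C' := C ≠ C' ∧ ((C.1 ∩ C'.1).Nonempty ∨ ∃ x ∈ C.1, ∃ y ∈ C'.1, G.Adj x y)
  symm := by
    constructor
    rintro C C' ⟨hne, h⟩
    refine ⟨hne.symm, ?_⟩
    rcases h with h | ⟨x, hx, y, hy, hxy⟩
    · exact Or.inl (by rwa [Set.inter_comm])
    · exact Or.inr ⟨y, hy, x, hx, hxy.symm⟩
  loopless := by constructor; rintro C ⟨hne, -⟩; exact hne rfl

/-- Linear forest: every connected component is a path. -/
def IsLinearForest {β : Type*} [Fintype β] (H : SimpleGraph β) : Prop :=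
  ∀ c : H.ConnectedComponent, ∃ n, Nonempty ((H.induce c.supp) ≃g pathGraph n)

/-! A copy of `P5 + rK1` in the blob graph is a family of connected sets `C₀, …, C₄, D₁, …, D_r`
of which two touch exactly when the corresponding vertices are adjacent. Inside
`G[C₀ ∪ ⋯ ∪ C₄]` a walk can pass from `Cᵢ` only into sets `Cⱼ` with `j ≤ i + 1`, so vertices of
`C₀` and `C₄` are at distance at least `4` there, and the first five vertices of a shortest path
between them induce a `P5` in `G`. It is anticomplete to all `D_j`, so adding one vertex of each
`D_j` gives an induced `P5 + rK1` in `G`. -/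

namespace SimpleGraph

variable {α : Type*} {G : SimpleGraph α}

section Anticomplete

variable {X X' Y : Set α}

theorem not_anticomplete_iff :
    ¬ G.Anticomplete X Y ↔ ∃ x ∈ X, ∃ y ∈ Y, x = y ∨ G.Adj x y := by
  simp only [Anticomplete, Set.disjoint_left, not_and_or, not_forall, not_not]
  constructor
  · rintro (⟨x, hx, hy⟩ | ⟨x, hx, y, hy, hxy⟩)
    exacts [⟨x, hx, x, hy, Or.inl rfl⟩, ⟨x, hx, y, hy, Or.inr hxy⟩]
  · rintro ⟨x, hx, y, hy, rfl | hxy⟩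
    exacts [Or.inl ⟨x, hx, hy⟩, Or.inr ⟨x, hx, y, hy, hxy⟩]

theorem Anticomplete.ne_of_mem (h : G.Anticomplete X Y) {x y : α} (hx : x ∈ X) (hy : y ∈ Y) :
    x ≠ y :=
  fun hxy => not_anticomplete_iff.mpr ⟨x, hx, y, hy, Or.inl hxy⟩ h

theorem Anticomplete.mono_left (h : G.Anticomplete X Y) (hX : X' ⊆ X) : G.Anticomplete X' Y :=
  ⟨h.1.mono_left hX, fun x hx => h.2 x (hX hx)⟩

theorem anticomplete_iUnion_left {ι : Sort*} {X : ι → Set α} :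
    G.Anticomplete (⋃ i, X i) Y ↔ ∀ i, G.Anticomplete (X i) Y := by
  simp only [Anticomplete, Set.disjoint_iUnion_left, Set.mem_iUnion, forall_exists_index]
  exact ⟨fun h i => ⟨h.1 i, fun x hx => h.2 x i hx⟩, fun h => ⟨fun i => (h i).1,
    fun x i hx => (h i).2 x hx⟩⟩

end Anticomplete

theorem preconnected_induce_iUnion {ι : Type*} {K : SimpleGraph ι} (hK : K.Preconnected)
    {C : ι → Set α} (hC : ∀ i, (G.induce (C i)).Preconnected)
    (htouch : ∀ i j, K.Adj i j → ¬ G.Anticomplete (C i) (C j)) :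
    (G.induce (⋃ i, C i)).Preconnected := by
  have lift : ∀ i {u v : α} (hu : u ∈ C i) (hv : v ∈ C i),
      (G.induce (⋃ i, C i)).Reachable ⟨u, Set.mem_iUnion_of_mem i hu⟩
        ⟨v, Set.mem_iUnion_of_mem i hv⟩ := fun i _ _ hu hv =>
    (hC i ⟨_, hu⟩ ⟨_, hv⟩).map (induceHomOfLE G (Set.subset_iUnion C i)).toHom
  have key : ∀ {i j} (q : K.Walk i j) {u v : α} (hu : u ∈ C i) (hv : v ∈ C j),
      (G.induce (⋃ i, C i)).Reachable ⟨u, Set.mem_iUnion_of_mem i hu⟩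
        ⟨v, Set.mem_iUnion_of_mem j hv⟩ := by
    intro i j q
    induction q with
    | nil => exact lift _
    | @cons i i' j hii' q ih =>
      intro u v hu hv
      obtain ⟨a, ha, b, hb, hab⟩ := not_anticomplete_iff.mp (htouch i i' hii')
      refine (lift i hu ha).trans (Reachable.trans ?_ (ih hb hv))
      rcases hab with rfl | hab
      · rfl
      · exact Adj.reachable hab
  rintro ⟨u, hu⟩ ⟨v, hv⟩
  obtain ⟨i, hi⟩ := Set.mem_iUnion.mp hu
  obtain ⟨j, hj⟩ := Set.mem_iUnion.mp hv
  exact key (hK i j).some hi hj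

theorem Walk.dist_getVert_getVert_of_length_eq_dist {u v : α} {p : G.Walk u v}
    (hp : p.length = G.dist u v) {i j : ℕ} (hij : i ≤ j) (hj : j ≤ p.length) :
    G.dist (p.getVert i) (p.getVert j) = j - i := by
  have hsub : ((p.drop i).take (j - i)).IsSubwalk p :=
    (isSubwalk_take _ _).trans (isSubwalk_drop _ _)
  have := length_eq_dist_of_subwalk hp hsub
  rw [take_length, drop_length, drop_getVert, Nat.add_sub_cancel' hij] at this
  rw [← this]
  omega

theorem exists_pathGraph_embedding_of_le_dist {u v : α} (huv : G.Reachable u v) {n : ℕ}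
    (hn : n ≤ G.dist u v) : Nonempty (pathGraph (n + 1) ↪g G) := by
  obtain ⟨p, hp⟩ := huv.exists_walk_length_eq_dist
  have hdist : ∀ i j : Fin (n + 1), i ≤ j →
      G.dist (p.getVert i) (p.getVert j) = j - i := fun i j hij =>
    Walk.dist_getVert_getVert_of_length_eq_dist hp hij (by omega)
  have hdist' : ∀ i j : Fin (n + 1),
      G.dist (p.getVert i) (p.getVert j) = max (i : ℕ) j - min (i : ℕ) j := by
    intro i j
    rcases le_total i j with hij | hji
    · rw [hdist i j hij]; omega
    · rw [dist_comm, hdist j i hji]; omega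
  refine ⟨⟨⟨fun i => p.getVert i, fun i j hij => ?_⟩, fun {i j} => ?_⟩⟩
  · have := hdist' i j
    simp only at hij
    rw [hij, dist_self] at this
    exact Fin.ext (by omega)
  · change G.Adj (p.getVert i) (p.getVert j) ↔ _
    rw [← dist_eq_one_iff_adj, hdist', pathGraph_adj]
    omega

theorem Walk.exists_mem_le_add_length {n : ℕ} {C : Fin n → Set α}
    (hstep : ∀ i j {u v : α}, u ∈ C i → v ∈ C j → (u = v ∨ G.Adj u v) → (j : ℕ) ≤ i + 1)
    {a b : ↥(⋃ i, C i)} (p : (G.induce (⋃ i, C i)).Walk a b) {j : Fin n} (hb : b.1 ∈ C j) :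
    ∃ i, a.1 ∈ C i ∧ (j : ℕ) ≤ i + p.length := by
  induction p with
  | nil => exact ⟨j, hb, by simp⟩
  | @cons a a' b ha p ih =>
    obtain ⟨k, hk, hjk⟩ := ih hb
    obtain ⟨i, hi⟩ := Set.mem_iUnion.mp a.2
    have := hstep i k hi hk (Or.inr ha)
    exact ⟨i, hi, by rw [length_cons]; omega⟩

theorem exists_pathGraph_embedding_of_anticomplete {n : ℕ} (hn : 2 ≤ n)
    {C : Fin (n + 1) → Set α} (hC : ∀ i, (G.induce (C i)).Connected)
    (hpath : ∀ i j, i ≠ j → ((pathGraph (n + 1)).Adj i j ↔ ¬ G.Anticomplete (C i) (C j))) :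
    ∃ f : pathGraph (n + 1) ↪g G, Set.range f ⊆ ⋃ i, C i := by
  set U := ⋃ i, C i
  have hstep : ∀ i j {u v : α}, u ∈ C i → v ∈ C j → (u = v ∨ G.Adj u v) →
      (j : ℕ) ≤ i + 1 := by
    intro i j u v hu hv huv
    by_cases hij : i = j
    · subst hij; omega
    · have := (hpath i j hij).mpr (not_anticomplete_iff.mpr ⟨u, hu, v, hv, huv⟩)
      rw [pathGraph_adj] at this
      omega
  have hconn : (G.induce U).Preconnected :=
    preconnected_induce_iUnion (pathGraph_preconnected _) (fun i => (hC i).preconnected)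
      fun i j hij => (hpath i j hij.ne).mp hij
  have hlen : ∀ {a b : U}, a.1 ∈ C 0 → b.1 ∈ C (Fin.last n) →
      ∀ p : (G.induce U).Walk a b, n ≤ p.length := by
    rintro a b hx hy (_ | ⟨hxb, q⟩)
    · have := hstep _ _ hx hy (Or.inl rfl)
      simp only [Fin.val_last, Fin.val_zero] at this
      omega
    -- the first step enters some `C i` with `i ≤ 1`, each later one raises the index by at most 1
    · obtain ⟨i, hi, hni⟩ := Walk.exists_mem_le_add_length hstep q hy
      have := hstep _ _ hx hi (Or.inr hxb)
      simp only [Fin.val_last, Fin.val_zero, Walk.length_cons] at hni this ⊢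
      omega
  obtain ⟨x, hx⟩ := (hC 0).nonempty
  obtain ⟨y, hy⟩ := (hC (Fin.last n)).nonempty
  have hxy := hconn ⟨x, Set.mem_iUnion_of_mem _ hx⟩ ⟨y, Set.mem_iUnion_of_mem _ hy⟩
  obtain ⟨p, hp⟩ := hxy.exists_walk_length_eq_dist
  obtain ⟨f⟩ := exists_pathGraph_embedding_of_le_dist hxy (hp ▸ hlen hx hy p)
  refine ⟨(Embedding.induce U).comp f, ?_⟩
  rintro _ ⟨i, rfl⟩
  exact (f i).2

theorem nonempty_sum_bot_embedding_of_anticomplete {β ι : Type*} {H : SimpleGraph β}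
    (f : H ↪g G) {D : ι → Set α} (hD : ∀ i, (D i).Nonempty)
    (hDD : Pairwise fun i j => G.Anticomplete (D i) (D j))
    (hfD : ∀ i, G.Anticomplete (Set.range f) (D i)) :
    Nonempty (H ⊕g (⊥ : SimpleGraph ι) ↪g G) := by
  choose d hd using hD
  have hf : ∀ b i, f b ≠ d i ∧ ¬ G.Adj (f b) (d i) := fun b i =>
    ⟨(hfD i).ne_of_mem ⟨b, rfl⟩ (hd i), (hfD i).2 _ ⟨b, rfl⟩ _ (hd i)⟩
  have hdd : ∀ i j, i ≠ j → d i ≠ d j ∧ ¬ G.Adj (d i) (d j) := fun i j hij =>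
    ⟨(hDD hij).ne_of_mem (hd i) (hd j), (hDD hij).2 _ (hd i) _ (hd j)⟩
  refine ⟨⟨⟨Sum.elim f d, ?_⟩, fun {s t} => ?_⟩⟩
  · rintro (b | i) (b' | j) h
    · exact congrArg _ (f.injective h)
    · exact ((hf b j).1 h).elim
    · exact ((hf b' i).1 h.symm).elim
    · by_contra hij
      exact (hdd i j fun h' => hij (congrArg _ h')).1 h
  · change G.Adj (Sum.elim f d s) (Sum.elim f d t) ↔ _
    rcases s with b | i <;> rcases t with b' | j
    · simp
    · simpa using (hf b j).2
    · simpa [G.adj_comm] using (hf b' i).2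
    · by_cases hij : i = j
      · subst hij; simp
      · simpa using (hdd i j hij).2

end SimpleGraph

open SimpleGraph

theorem blob_adj_iff {α : Type*} {G : SimpleGraph α} {𝒞 : Set (Set α)} {C C' : 𝒞} :
    (blob G 𝒞).Adj C C' ↔ C ≠ C' ∧ ¬ G.Anticomplete C C' := by
  simp only [blob, Anticomplete, not_and_or, ← Set.not_disjoint_iff_nonempty_inter]
  simp

theorem SimpleGraph.Embedding.adj_iff_not_anticomplete_of_blob {α β : Type*}
    {G : SimpleGraph α} {𝒞 : Set (Set α)} {H : SimpleGraph β} (e : H ↪g blob G 𝒞) {a b : β}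
    (hab : a ≠ b) : H.Adj a b ↔ ¬ G.Anticomplete (e a) (e b) := by
  rw [← e.map_rel_iff, blob_adj_iff, and_iff_right (e.injective.ne hab)]

theorem stmt4_general (r : ℕ) {α : Type*} (G : SimpleGraph α) (𝒞 : Set (Set α))
    (hconn : ∀ C ∈ 𝒞, (G.induce C).Connected)
    (hG : G.InducedFree (P5rK1 r)) : (blob G 𝒞).InducedFree (P5rK1 r) := by
  refine ⟨fun e => ?_⟩
  have hanti := fun a b (hab : a ≠ b) => e.adj_iff_not_anticomplete_of_blob hab
  obtain ⟨f, hf⟩ := exists_pathGraph_embedding_of_anticomplete (n := 4) (by norm_num)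
    (C := fun i => e (.inl i)) (fun i => hconn _ (e _).2)
    fun i j hij => by simpa [P5rK1] using hanti _ _ (Sum.inl_injective.ne hij)
  refine hG.false (nonempty_sum_bot_embedding_of_anticomplete f (D := fun j => e (.inr j))
    (fun j => Set.nonempty_coe_sort.mp (hconn _ (e _).2).nonempty) ?_ ?_).some
  · intro i j hij
    simpa [P5rK1] using hanti _ _ (Sum.inr_injective.ne hij)
  · intro j
    refine (anticomplete_iUnion_left.mpr fun i => ?_).mono_left hf
    simpa [P5rK1] using hanti (.inl i) (.inr j) Sum.inl_ne_inr

theorem stmt4 (r : ℕ) {α : Type*} (G : SimpleGraph α) (𝒞 : Set (Set α)) (h𝒞fin : 𝒞.Finite)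
    (hconn : ∀ C ∈ 𝒞, (G.induce C).Connected)
    (hG : G.InducedFree (P5rK1 r)) : (blob G 𝒞).InducedFree (P5rK1 r) :=
  stmt4_general r G 𝒞 hconn hG
end

section
/- Let r ≥ 1 and k ≥ 1, let G be a (P5 + rK1)-free graph, and let P be an induced copy of P5 in G. If the induced subgraph on V(G) \ (V(P) ∪ N(V(P))) is k-colourable, then |V(G) \ (V(P) ∪ N(V(P)))| ≤ k(r−1). -/
open SimpleGraph

/-!
The vertices far from the induced `P₅` are anticomplete to it, so an independent set among them
together with the path induces `P₅ + |I| K₁`; hence every colour class of a `k`-colouring of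
these vertices has at most `r - 1` elements.
-/

namespace SimpleGraph

variable {α β γ : Type*} {G : SimpleGraph α}

theorem Anticomplete.mono_right {X Y Y' : Set α} (h : G.Anticomplete X Y) (hY : Y' ⊆ Y) :
    G.Anticomplete X Y' :=
  ⟨h.1.mono_right hY, fun x hx y hy => h.2 x hx y (hY hy)⟩

theorem anticomplete_compl_union_extN (S : Set α) : G.Anticomplete S (S ∪ G.extN S)ᶜ := by
  refine ⟨Set.disjoint_compl_right_iff_subset.2 Set.subset_union_left,
    fun x hx y hy hxy => hy (Or.inr ⟨fun hyS => hy (Or.inl hyS), x, hx, hxy⟩)⟩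

def Embedding.sumOfAnticomplete {H : SimpleGraph β} {H' : SimpleGraph γ}
    (f : H ↪g G) (g : H' ↪g G) (h : G.Anticomplete (Set.range f) (Set.range g)) :
    H ⊕g H' ↪g G where
  toFun := Sum.elim f g
  inj' := by
    rintro (a | a) (b | b) hab
    · exact congrArg Sum.inl (f.injective hab)
    · exact (h.1.ne_of_mem ⟨a, rfl⟩ ⟨b, rfl⟩ hab).elim
    · exact (h.1.ne_of_mem ⟨b, rfl⟩ ⟨a, rfl⟩ hab.symm).elim
    · exact congrArg Sum.inr (g.injective hab)
  map_rel_iff' := by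
    rintro (a | a) (b | b)
    · exact f.map_adj_iff
    · exact iff_of_false (h.2 _ ⟨a, rfl⟩ _ ⟨b, rfl⟩) (by simp)
    · exact iff_of_false (fun hab => h.2 _ ⟨b, rfl⟩ _ ⟨a, rfl⟩ hab.symm) (by simp)
    · exact g.map_adj_iff

def IsIndepSet.botEmbedding {s : Set α} (hs : G.IsIndepSet s) (e : β ↪ s) :
    (⊥ : SimpleGraph β) ↪g G where
  toFun b := e b
  inj' a b hab := e.injective (Subtype.ext hab)
  map_rel_iff' {a b} := by
    simp only [bot_adj, iff_false]
    intro hab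
    exact hs (e a).2 (e b).2 hab.ne hab

theorem IsIndepSet.range_botEmbedding_subset {s : Set α} (hs : G.IsIndepSet s) (e : β ↪ s) :
    Set.range (hs.botEmbedding e) ⊆ s := by
  rintro _ ⟨b, rfl⟩
  exact (e b).2

theorem card_lt_of_isIndepSet_of_anticomplete {H : SimpleGraph β} {r : ℕ}
    (hG : G.InducedFree (H ⊕g (⊥ : SimpleGraph (Fin r)))) (f : H ↪g G) (s : Finset α)
    (hs : G.IsIndepSet s) (hanti : G.Anticomplete (Set.range f) s) : s.card < r := by
  by_contra! hrs
  obtain ⟨e⟩ : Nonempty (Fin r ↪ (s : Set α)) :=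
    Function.Embedding.nonempty_of_card_le (by simpa using hrs)
  exact hG.false <| f.sumOfAnticomplete (hs.botEmbedding e)
    (hanti.mono_right (hs.range_botEmbedding_subset e))

theorem Colorable.card_le_mul [Fintype α] {k m : ℕ} (hG : G.Colorable k)
    (h : ∀ s : Finset α, G.IsIndepSet s → s.card ≤ m) : Fintype.card α ≤ k * m := by
  classical
  obtain ⟨C⟩ := hG
  calc Fintype.card α ≤ m * (Finset.univ : Finset (Fin k)).card :=
        Finset.card_le_mul_card_image_of_maps_to (fun a _ => Finset.mem_univ (C a)) m
          fun i _ => h _ fun x hx y hy hxy hadj => C.valid hadj (by simp_all)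
    _ = k * m := by simp [mul_comm]

end SimpleGraph

theorem stmt8_general {α : Type*} [Fintype α] (r k : ℕ)
    (G : SimpleGraph α) (hG : G.InducedFree (P5rK1 r)) (p : pathGraph 5 ↪g G)
    (hcol : (G.induce (Set.range p ∪ G.extN (Set.range p))ᶜ).Colorable k) :
    ((Set.range p ∪ G.extN (Set.range p))ᶜ : Set α).ncard ≤ k * (r - 1) := by
  classical
  set S : Set α := (Set.range p ∪ G.extN (Set.range p))ᶜ
  have hfar : G.Anticomplete (Set.range p) S := G.anticomplete_compl_union_extN _
  rw [← Nat.card_coe_set_eq, Nat.card_eq_fintype_card]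
  refine hcol.card_le_mul fun s hs => Nat.le_sub_one_of_lt ?_
  have hsG : G.IsIndepSet (s.map (Function.Embedding.subtype (· ∈ S)) : Set α) := by
    rw [Finset.coe_map]
    exact hs.image
  simpa using card_lt_of_isIndepSet_of_anticomplete hG p _ hsG
    (hfar.mono_right (Finset.map_subtype_subset s))

theorem stmt8 {α : Type*} [Fintype α] (r k : ℕ) (hr : 1 ≤ r) (hk : 1 ≤ k)
    (G : SimpleGraph α) (hG : G.InducedFree (P5rK1 r)) (p : pathGraph 5 ↪g G)
    (hcol : (G.induce (Set.range p ∪ G.extN (Set.range p))ᶜ).Colorable k) :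
    ((Set.range p ∪ G.extN (Set.range p))ᶜ : Set α).ncard ≤ k * (r - 1) :=
  stmt8_general r k G hG p hcol
end

section
/- Let r ≥ 1 and let G be a (P5 + rK1)-free graph. Let v be a vertex and let y1, y2, y3 be three distinct pairwise non-adjacent neighbours of v. Suppose n1, n2, n3 are distinct vertices, each non-adjacent to v, such that for each i ∈ {1,2,3}, ni is adjacent to yi and non-adjacent to yj for all j ≠ i. Suppose Z is an independent set of size r that is anticomplete to {v, y1, y2, y3, n1, n2, n3}. Then this configuration is impossible. -/
open SimpleGraph

/-!
There is always an induced five-vertex path through `v`: if some `nᵢ, nⱼ` are non-adjacent,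
`nᵢ yᵢ v yⱼ nⱼ` is one; otherwise `n₀ n₁ n₂` is a triangle and `n₂ n₀ y₀ v y₁` is one.
As `Z` is independent and sees none of these vertices, the path together with `Z` induces
`P₅ + rK₁`.
-/

namespace SimpleGraph

variable {α β γ : Type*} {G : SimpleGraph α} {H : SimpleGraph β} {K : SimpleGraph γ}

theorem Anticomplete.symm {X Y : Set α} (h : G.Anticomplete X Y) : G.Anticomplete Y X :=
  ⟨h.1.symm, fun y hy x hx hyx => h.2 x hx y hy hyx.symm⟩

theorem Anticomplete.mono {X X' Y Y' : Set α} (h : G.Anticomplete X Y) (hX : X' ⊆ X)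
    (hY : Y' ⊆ Y) : G.Anticomplete X' Y' :=
  ⟨h.1.mono hX hY, fun x hx y hy => h.2 x (hX hx) y (hY hy)⟩

/-- Injectivity comes for free when distinct vertices of `H` have distinct neighbourhoods. -/
def Embedding.ofAdjIff (f : β → α)
    (hH : ∀ i j, (∀ k, H.Adj i k ↔ H.Adj j k) → i = j)
    (hf : ∀ i j, G.Adj (f i) (f j) ↔ H.Adj i j) : H ↪g G where
  toFun := f
  inj' i j hij := hH i j fun k => by rw [← hf, ← hf, hij]
  map_rel_iff' := hf _ _

theorem Embedding.range_ofAdjIff (f : β → α)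
    (hH : ∀ i j, (∀ k, H.Adj i k ↔ H.Adj j k) → i = j)
    (hf : ∀ i j, G.Adj (f i) (f j) ↔ H.Adj i j) :
    Set.range (Embedding.ofAdjIff f hH hf) = Set.range f :=
  rfl

def Embedding.sumElim (f : H ↪g G) (g : K ↪g G)
    (hfg : G.Anticomplete (Set.range f) (Set.range g)) : H ⊕g K ↪g G where
  toFun := Sum.elim f g
  inj' := by
    rintro (i | i) (j | j) h
    · exact congrArg Sum.inl (f.injective h)
    · exact (Set.disjoint_left.mp hfg.1 ⟨i, rfl⟩ ⟨j, h.symm⟩).elim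
    · exact (Set.disjoint_left.mp hfg.1 ⟨j, rfl⟩ ⟨i, h⟩).elim
    · exact congrArg Sum.inr (g.injective h)
  map_rel_iff' := by
    rintro (i | i) (j | j)
    · exact f.map_adj_iff
    · exact iff_of_false (hfg.2 _ ⟨i, rfl⟩ _ ⟨j, rfl⟩) (by simp)
    · exact iff_of_false (fun h => hfg.2 _ ⟨j, rfl⟩ _ ⟨i, rfl⟩ h.symm) (by simp)
    · exact g.map_adj_iff

noncomputable def IsIndep.embedding {Z : Set α} (hZ : G.IsIndep Z) (hZfin : Z.Finite)
    {r : ℕ} (hZcard : Z.ncard = r) : (⊥ : SimpleGraph (Fin r)) ↪g G where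
  toEmbedding :=
    have : Finite Z := hZfin
    (Finite.equivFinOfCardEq (by rw [Nat.card_coe_set_eq, hZcard])).symm.toEmbedding.trans
      (Function.Embedding.subtype _)
  map_rel_iff' := iff_of_false (hZ (Subtype.property _) (Subtype.property _)) (by simp)

theorem IsIndep.range_embedding {Z : Set α} (hZ : G.IsIndep Z) (hZfin : Z.Finite) {r : ℕ}
    (hZcard : Z.ncard = r) : Set.range (hZ.embedding hZfin hZcard) ⊆ Z := by
  rintro _ ⟨i, rfl⟩
  exact Subtype.property _

theorem pathGraph_five_eq_of_adj_iff :
    ∀ i j : Fin 5, (∀ k, (pathGraph 5).Adj i k ↔ (pathGraph 5).Adj j k) → i = j := by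
  simp only [pathGraph_adj]
  decide

def pathFiveEmbedding {a₀ a₁ a₂ a₃ a₄ : α}
    (h₀₁ : G.Adj a₀ a₁) (h₁₂ : G.Adj a₁ a₂) (h₂₃ : G.Adj a₂ a₃) (h₃₄ : G.Adj a₃ a₄)
    (h₀₂ : ¬G.Adj a₀ a₂) (h₀₃ : ¬G.Adj a₀ a₃) (h₀₄ : ¬G.Adj a₀ a₄)
    (h₁₃ : ¬G.Adj a₁ a₃) (h₁₄ : ¬G.Adj a₁ a₄) (h₂₄ : ¬G.Adj a₂ a₄) : pathGraph 5 ↪g G :=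
  Embedding.ofAdjIff ![a₀, a₁, a₂, a₃, a₄] pathGraph_five_eq_of_adj_iff <| by
    intro i j
    fin_cases i <;> fin_cases j <;>
      simp [pathGraph_adj, G.adj_comm a₁ a₀, G.adj_comm a₂ a₁, G.adj_comm a₃ a₂,
        G.adj_comm a₄ a₃, G.adj_comm a₂ a₀, G.adj_comm a₃ a₀, G.adj_comm a₄ a₀,
        G.adj_comm a₃ a₁, G.adj_comm a₄ a₁, G.adj_comm a₄ a₂, *]

end SimpleGraph

namespace SimpleGraph.InducedFree

variable {α : Type*} {G : SimpleGraph α} {r : ℕ} {Z : Set α}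

theorem false_of_path_five (hG : G.InducedFree (P5rK1 r)) (hZ : G.IsIndep Z)
    (hZfin : Z.Finite) (hZcard : Z.ncard = r) {a₀ a₁ a₂ a₃ a₄ : α}
    (hZa : G.Anticomplete Z {a₀, a₁, a₂, a₃, a₄})
    (h₀₁ : G.Adj a₀ a₁) (h₁₂ : G.Adj a₁ a₂) (h₂₃ : G.Adj a₂ a₃) (h₃₄ : G.Adj a₃ a₄)
    (h₀₂ : ¬G.Adj a₀ a₂) (h₀₃ : ¬G.Adj a₀ a₃) (h₀₄ : ¬G.Adj a₀ a₄)
    (h₁₃ : ¬G.Adj a₁ a₃) (h₁₄ : ¬G.Adj a₁ a₄) (h₂₄ : ¬G.Adj a₂ a₄) : False := by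
  let path := pathFiveEmbedding h₀₁ h₁₂ h₂₃ h₃₄ h₀₂ h₀₃ h₀₄ h₁₃ h₁₄ h₂₄
  have hrange : Set.range path = {a₀, a₁, a₂, a₃, a₄} := by
    simp only [path, pathFiveEmbedding, Embedding.range_ofAdjIff, Matrix.range_cons,
      Matrix.range_empty, Set.union_empty, Set.singleton_union]
  exact hG.false <| path.sumElim _ <|
    hZa.symm.mono hrange.subset (hZ.range_embedding hZfin hZcard)

end SimpleGraph.InducedFree

theorem stmt12_general {α : Type*} (r : ℕ) (hr : 1 ≤ r) (G : SimpleGraph α)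
    (hG : G.InducedFree (P5rK1 r)) (v : α) (y n : Fin 3 → α)
    (hyv : ∀ i, G.Adj v (y i)) (hyy : ∀ i j, i ≠ j → ¬ G.Adj (y i) (y j))
    (hnv : ∀ i, ¬ G.Adj v (n i))
    (hny : ∀ i j, G.Adj (n i) (y j) ↔ i = j)
    (Z : Set α) (hZ : G.IsIndep Z) (hZcard : Z.ncard = r)
    (hZanti : G.Anticomplete Z ({v} ∪ Set.range y ∪ Set.range n)) :
    False := by
  have hZfin : Z.Finite := Set.finite_of_ncard_pos (by omega)
  have hny_self : ∀ i, G.Adj (n i) (y i) := fun i => (hny i i).2 rfl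
  have hny_ne : ∀ i j, i ≠ j → ¬G.Adj (n i) (y j) := fun i j hij h => hij ((hny i j).1 h)
  by_cases htriangle : ∀ i j : Fin 3, i ≠ j → G.Adj (n i) (n j)
  · refine hG.false_of_path_five hZ hZfin hZcard (a₀ := n 2) (a₁ := n 0) (a₂ := y 0)
      (a₃ := v) (a₄ := y 1) (hZanti.mono subset_rfl ?_) (htriangle 2 0 (by decide)) (hny_self 0)
      (hyv 0).symm (hyv 1) (hny_ne 2 0 (by decide)) (fun h => hnv 2 h.symm)
      (hny_ne 2 1 (by decide)) (fun h => hnv 0 h.symm) (hny_ne 0 1 (by decide))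
      (hyy 0 1 (by decide))
    simp [Set.insert_subset_iff]
  · push Not at htriangle
    obtain ⟨i, j, hij, hn⟩ := htriangle
    refine hG.false_of_path_five hZ hZfin hZcard (hZanti.mono subset_rfl ?_) (hny_self i)
      (hyv i).symm (hyv j) (hny_self j).symm (fun h => hnv i h.symm) (hny_ne i j hij) hn
      (hyy i j hij) (fun h => hny_ne j i hij.symm h.symm) (hnv j)
    simp [Set.insert_subset_iff]

theorem stmt12 {α : Type*} (r : ℕ) (hr : 1 ≤ r) (G : SimpleGraph α)
    (hG : G.InducedFree (P5rK1 r)) (v : α) (y n : Fin 3 → α)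
    (hy_inj : Function.Injective y) (hn_inj : Function.Injective n)
    (hyv : ∀ i, G.Adj v (y i)) (hyy : ∀ i j, i ≠ j → ¬ G.Adj (y i) (y j))
    (hnv : ∀ i, ¬ G.Adj v (n i))
    (hny : ∀ i j, G.Adj (n i) (y j) ↔ i = j)
    (Z : Set α) (hZ : G.IsIndep Z) (hZcard : Z.ncard = r)
    (hZanti : G.Anticomplete Z ({v} ∪ Set.range y ∪ Set.range n)) :
    False :=
  stmt12_general r hr G hG v y n hyv hyy hnv hny Z hZ hZcard hZanti
end
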